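/- arXiv:2004.02098 — 15 statements merged into one kernel-verified Lean document; each statement's English description precedes it below -/
import Mathlib

section
/- Let N be a Nijenhuis operator on a pre-Lie algebra (g, ·). Then the deformed multiplication x·_N y = N(x)·y + x·N(y) − N(x·y) is again a pre-Lie algebra multiplication on g, and N is an algebra homomorphism from (g, ·_N) to (g, ·). -/
/-!
Write `A_m(a, b, c) = (a·b)·c − a·(b·c)`; the pre-Lie identity says `A_m` is symmetric in its
first two arguments. Expanding `A_{m_N}` by bilinearity and using the Nijenhuis identity to
collapse every product `N x · N y` gives
`A_{m_N}(a,b,c) = Σ A_m(two of a,b,c hit by N) − N(Σ A_m(one of a,b,c hit by N)) + N² A_m(a,b,c)`,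
and each of the three groups is symmetric in `a, b` as soon as `A_m` is.
-/

/-- The pre-Lie identity for a (bilinear) multiplication given as a plain map. -/
def PreLieFn {g : Type*} [AddCommGroup g] (m : g → g → g) : Prop :=
  ∀ x y z : g, m (m x y) z - m x (m y z) = m (m y x) z - m y (m x z)

/-- The Nijenhuis identity for an operator `N` with respect to a multiplication `m`. -/
def NijFn {g : Type*} [AddCommGroup g] (m : g → g → g) (N : g → g) : Prop :=
  ∀ x y : g, m (N x) (N y) = N (m (N x) y + m x (N y) - N (m x y))

/-- The multiplication deformed by an operator `N`. -/
def deform {g : Type*} [AddCommGroup g] (m : g → g → g) (N : g → g) : g → g → g :=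
  fun x y => m (N x) y + m x (N y) - N (m x y)

def associatorFn {g : Type*} [AddCommGroup g] (m : g → g → g) (a b c : g) : g :=
  m (m a b) c - m a (m b c)

theorem preLieFn_iff_associatorFn_symm {g : Type*} [AddCommGroup g] (m : g → g → g) :
    PreLieFn m ↔ ∀ a b c : g, associatorFn m a b c = associatorFn m b a c :=
  Iff.rfl

section Bilinear

variable {K g : Type*} [CommSemiring K] [AddCommGroup g] [Module K g]
  (m : g →ₗ[K] g →ₗ[K] g) (N : g →ₗ[K] g)

theorem NijFn.map_deform (hN : NijFn (fun x y => m x y) N) (x y : g) :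
    N (deform (fun x y => m x y) N x y) = m (N x) (N y) :=
  (hN x y).symm

theorem associatorFn_deform (hN : NijFn (fun x y => m x y) N) (a b c : g) :
    associatorFn (deform (fun x y => m x y) N) a b c
      = associatorFn (fun x y => m x y) (N a) (N b) c
        + associatorFn (fun x y => m x y) (N a) b (N c)
        + associatorFn (fun x y => m x y) a (N b) (N c)
        - N (associatorFn (fun x y => m x y) (N a) b c
            + associatorFn (fun x y => m x y) a (N b) c
            + associatorFn (fun x y => m x y) a b (N c))
        + N (N (associatorFn (fun x y => m x y) a b c)) := by
  have hN' : ∀ x y : g, m (N x) (N y) = N (m (N x) y + m x (N y) - N (m x y)) := hN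
  simp only [associatorFn, deform, map_add, map_sub, LinearMap.add_apply, LinearMap.sub_apply,
    hN']
  abel

theorem PreLieFn.deform (hm : PreLieFn (fun x y => m x y)) (hN : NijFn (fun x y => m x y) N) :
    PreLieFn (deform (fun x y => m x y) N) := by
  rw [preLieFn_iff_associatorFn_symm] at hm ⊢
  intro a b c
  rw [associatorFn_deform m N hN, associatorFn_deform m N hN, hm (N a) (N b) c,
    hm (N a) b (N c), hm a (N b) (N c), hm (N a) b c, hm a (N b) c, hm a b (N c), hm a b c]
  abel_nf -- also normalizes the sums under `N`, which `abel` treats as atoms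

end Bilinear

/-- the deformed multiplication `·_N` is again pre-Lie and `N` is a
homomorphism from `(g, ·_N)` to `(g, ·)`. -/
theorem deformed_preLie_and_hom {K g : Type*} [Field K] [AddCommGroup g] [Module K g]
    (m : g →ₗ[K] g →ₗ[K] g) (hm : PreLieFn (fun x y => m x y))
    (N : g →ₗ[K] g) (hN : NijFn (fun x y => m x y) N) :
    PreLieFn (deform (fun x y => m x y) N) ∧
    (∀ x y : g, N (deform (fun x y => m x y) N x y) = m (N x) (N y)) :=
  ⟨hm.deform m N hN, hN.map_deform m N⟩
end

section
/- Let N be a Nijenhuis operator on a pre-Lie algebra (g, ·). Then for every natural number l, N^l is also a Nijenhuis operator on the deformed pre-Lie algebra (g, ·_{N^k}) for each k, and the pre-Lie algebras (g, (·_{N^k})_{N^l}) and (g, ·_{N^{k+l}}) coincide. -/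
/-!
Call operators `A`, `B` compatible for a product `·` when the mixed Nijenhuis torsion
`A x · B y + B x · A y - A (x ·_B y) - B (x ·_A y)` vanishes. For additive `B` this is exactly
the identity `(·_B)_A = ·_{B ∘ A}`, and together with compatibility of `A` and `B ∘ A` it
carries a Nijenhuis operator `A` for `·` over to one for `·_B`. For a Nijenhuis operator `N`,
all pairs of powers `(N^i, N^j)` are compatible, by induction first on `j` with `i = 1`, then
on `i`; each `N^l` is then Nijenhuis by induction, since `N ∘ N^l` is Nijenhuis for `·` once
`N^l` is Nijenhuis for `·_N`.
-/

/-- For a biadditive product and additive Nijenhuis `A`, `B`, this says that `A + B` is Nijenhuis. -/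
def NijCompatible {g : Type*} [AddCommGroup g] (m : g → g → g) (A B : g → g) : Prop :=
  ∀ x y : g, m (A x) (B y) + m (B x) (A y) = A (deform m B x y) + B (deform m A x y)

section

variable {g F : Type*} [AddCommGroup g] [FunLike F g g] [AddMonoidHomClass F g g]
  {m : g → g → g}

theorem NijCompatible.symm {A B : g → g} (h : NijCompatible m A B) : NijCompatible m B A :=
  fun x y => by rw [add_comm, h x y, add_comm]

theorem nijCompatible_id (A : g → g) : NijCompatible m A id := fun x y => by
  simp only [deform, id, add_sub_cancel_right, add_sub_cancel]

theorem deform_deform_eq_iff (A : g → g) (B : F) :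
    deform (deform m B) A = deform m (B ∘ A) ↔ NijCompatible m A B := by
  have key : ∀ x y, deform (deform m B) A x y - deform m (B ∘ A) x y =
      m (A x) (B y) + m (B x) (A y) - (A (deform m B x y) + B (deform m A x y)) := by
    intro x y
    simp only [deform, Function.comp, map_add, map_sub]
    abel
  simp only [funext_iff, NijCompatible, ← sub_eq_zero (a := deform _ _ _ _), key, sub_eq_zero]

theorem NijFn.nijCompatible_comp {N : F} (hN : NijFn m N) {B : g → g}
    (h : NijCompatible m N B) : NijCompatible m N (N ∘ B) := fun x y => by
  have h1 := hN x (B y)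
  have h2 := hN (B x) y
  have h3 := congrArg N (h x y)
  simp only [deform, Function.comp, map_add, map_sub] at h1 h2 h3 ⊢
  linear_combination (norm := module) h1 + h2 + h3

theorem NijCompatible.comp_left {N B : F} {A : g → g} (hNB : NijCompatible m N B)
    (hNBA : NijCompatible m N (B ∘ A)) (hAB : NijCompatible m A B)
    (hAN : NijCompatible m A N) : NijCompatible m (N ∘ A) B := fun x y => by
  have h1 := hNB (A x) y
  have h2 := hNB x (A y)
  have h3 := hNBA x y
  have h4 := congrArg N (hAB x y)
  have h5 := congrArg B (hAN x y)
  simp only [deform, Function.comp, map_add, map_sub] at h1 h2 h3 h4 h5 ⊢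
  linear_combination (norm := module) h1 + h2 - h3 + h4 + h5

theorem NijFn.nijFn_deform {A : g → g} {B : F} (hA : NijFn m A) (hAB : NijCompatible m A B)
    (hABA : NijCompatible m A (B ∘ A)) : NijFn (deform m B) A := fun x y => by
  change _ = A (deform (deform m B) A x y)
  rw [(deform_deform_eq_iff A B).mpr hAB]
  have h := hABA x y
  simp only [deform, Function.comp, hA x y] at h ⊢
  linear_combination (norm := module) h

theorem NijFn.comp {A : F} {B : g → g} (hA : NijFn m A) (hB : NijFn (deform m A) B)
    (hBA : NijCompatible m B A) : NijFn m (A ∘ B) := fun x y => by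
  change _ = A (B (deform m (A ∘ B) x y))
  rw [← (deform_deform_eq_iff B A).mpr hBA]
  exact (hA (B x) (B y)).trans (congrArg A (hB x y))

end

section

variable {R g : Type*} [Semiring R] [AddCommGroup g] [Module R g] {m : g → g → g}
  {N : Module.End R g}

theorem NijFn.nijCompatible_pow_right (hN : NijFn m N) (j : ℕ) :
    NijCompatible m N ⇑(N ^ j) := by
  induction j with
  | zero => exact nijCompatible_id _
  | succ j ih => rw [pow_succ', Module.End.coe_mul]; exact hN.nijCompatible_comp ih

theorem NijFn.nijCompatible_pow_pow (hN : NijFn m N) (i j : ℕ) :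
    NijCompatible m ⇑(N ^ i) ⇑(N ^ j) := by
  induction i with
  | zero => exact (nijCompatible_id _).symm
  | succ i ih =>
    rw [pow_succ', Module.End.coe_mul]
    refine NijCompatible.comp_left (hN.nijCompatible_pow_right j) ?_ ih
      (hN.nijCompatible_pow_right i).symm
    rw [← Module.End.coe_mul, ← pow_add]
    exact hN.nijCompatible_pow_right (j + i)

theorem NijFn.pow (hN : NijFn m N) (l : ℕ) : NijFn m ⇑(N ^ l) := by
  induction l with
  | zero =>
    simp [NijFn]
  | succ l ih =>
    have hlN := (hN.nijCompatible_pow_right l).symm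
    have hNl : NijFn (deform m N) ⇑(N ^ l) := by
      refine ih.nijFn_deform hlN ?_
      rw [← Module.End.coe_mul, ← pow_succ']
      exact hN.nijCompatible_pow_pow l (l + 1)
    rw [pow_succ', Module.End.coe_mul]
    exact hN.comp hNl hlN

end

theorem power_nijenhuis_deform_general {K g : Type*} [Field K] [AddCommGroup g] [Module K g]
    (m : g →ₗ[K] g →ₗ[K] g)
    (N : Module.End K g) (hN : NijFn (fun x y => m x y) N) :
    ∀ k l : ℕ,
      NijFn (deform (fun x y => m x y) (fun a : g => (N ^ k) a)) (fun a : g => (N ^ l) a) ∧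
      (∀ x y : g, deform (deform (fun x y => m x y) (fun a : g => (N ^ k) a)) (fun a : g => (N ^ l) a) x y =
        deform (fun x y => m x y) (fun a : g => (N ^ (k + l)) a) x y) := by
  intro k l
  have hlk := hN.nijCompatible_pow_pow l k
  have hkl : ⇑(N ^ (k + l)) = ⇑(N ^ k) ∘ ⇑(N ^ l) := by rw [pow_add, Module.End.coe_mul]
  refine ⟨(hN.pow l).nijFn_deform hlk ?_, fun x y => ?_⟩
  · rw [← hkl]; exact hN.nijCompatible_pow_pow l (k + l)
  · rw [hkl, (deform_deform_eq_iff _ _).mpr hlk]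

/-- for a Nijenhuis operator `N` on a pre-Lie algebra, each power
`N^l` is a Nijenhuis operator on the deformed pre-Lie algebra `(g, ·_{N^k})`,
and `(·_{N^k})_{N^l}` coincides with `·_{N^{k+l}}`. -/
theorem power_nijenhuis_deform {K g : Type*} [Field K] [AddCommGroup g] [Module K g]
    (m : g →ₗ[K] g →ₗ[K] g) (hm : PreLieFn (fun x y => m x y))
    (N : Module.End K g) (hN : NijFn (fun x y => m x y) N) :
    ∀ k l : ℕ,
      NijFn (deform (fun x y => m x y) (fun a : g => (N ^ k) a)) (fun a : g => (N ^ l) a) ∧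
      (∀ x y : g, deform (deform (fun x y => m x y) (fun a : g => (N ^ k) a)) (fun a : g => (N ^ l) a) x y =
        deform (fun x y => m x y) (fun a : g => (N ^ (k + l)) a) x y) :=
  power_nijenhuis_deform_general m N hN
end

section
/- Let N be a Nijenhuis operator on a pre-Lie algebra (g, ·). Then for all natural numbers k, l, the map N^l is a pre-Lie algebra homomorphism from (g, ·_{N^{k+l}}) to (g, ·_{N^k}). -/
/-!
The Nijenhuis identity says exactly that `N` is a homomorphism from `·_N` to `·`. Inducting on
`k`, it gives the compatibility `N x · N^k y + N^k x · N y = N (x ·_{N^k} y) + N^k (x ·_N y)`,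
from which `N (x ·_{N^{k+1}} y) = N x ·_{N^k} N y` follows; iterating this `l` times shows that
`N^l` maps `·_{N^{k+l}}` to `·_{N^k}`.
-/

namespace NijFn

variable {R g : Type*} [CommRing R] [AddCommGroup g] [Module R g]
  {m : g →ₗ[R] g →ₗ[R] g} {N : Module.End R g}

lemma mul_pow_add_pow_mul (hN : NijFn (fun x y => m x y) N) (k : ℕ) (x y : g) :
    m (N x) ((N ^ k) y) + m ((N ^ k) x) (N y) =
      N (deform (fun x y => m x y) ⇑(N ^ k) x y) + (N ^ k) (deform (fun x y => m x y) N x y) := by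
  induction k generalizing x y with
  | zero => simp [deform]
  | succ k ih =>
    have hNx := hN x ((N ^ k) y)
    have hNy := hN ((N ^ k) x) y
    have ih' := congrArg N (ih x y)
    simp only [deform, map_add, map_sub] at hNx hNy ih' ⊢
    simp only [pow_succ', Module.End.mul_apply, hNx, hNy]
    rw [← sub_eq_zero, ← sub_eq_zero.mpr ih']
    have hcomm (z : g) : (N ^ k) (N z) = N ((N ^ k) z) := LinearMap.congr_fun (pow_mul_comm' N k) z
    simp only [hcomm]
    abel

lemma map_deform_pow_succ (hN : NijFn (fun x y => m x y) N) (k : ℕ) (x y : g) :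
    N (deform (fun x y => m x y) ⇑(N ^ (k + 1)) x y) =
      deform (fun x y => m x y) ⇑(N ^ k) (N x) (N y) := by
  have hcompat := hN.mul_pow_add_pow_mul (k + 1) x y
  have hN_xy : (N ^ k) (m (N x) (N y)) = (N ^ (k + 1)) (deform (fun x y => m x y) N x y) := by
    rw [pow_succ, Module.End.mul_apply]
    exact congrArg _ (hN x y)
  simp only [deform, pow_succ, Module.End.mul_apply] at hcompat hN_xy ⊢
  rw [hN_xy, eq_sub_iff_add_eq, ← hcompat]
  abel

lemma pow_map_deform_pow_add (hN : NijFn (fun x y => m x y) N) (k l : ℕ) (x y : g) :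
    (N ^ l) (deform (fun x y => m x y) ⇑(N ^ (k + l)) x y) =
      deform (fun x y => m x y) ⇑(N ^ k) ((N ^ l) x) ((N ^ l) y) := by
  induction l generalizing x y with
  | zero => rfl
  | succ l ih =>
    calc (N ^ (l + 1)) (deform (fun x y => m x y) ⇑(N ^ (k + l + 1)) x y)
        = (N ^ l) (N (deform (fun x y => m x y) ⇑(N ^ (k + l + 1)) x y)) := by
          rw [pow_succ, Module.End.mul_apply]
      _ = (N ^ l) (deform (fun x y => m x y) ⇑(N ^ (k + l)) (N x) (N y)) := by
          rw [hN.map_deform_pow_succ]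
      _ = deform (fun x y => m x y) ⇑(N ^ k) ((N ^ (l + 1)) x) ((N ^ (l + 1)) y) := by
          rw [ih, pow_succ, Module.End.mul_apply, Module.End.mul_apply]

end NijFn

theorem power_deform_hom_general {K g : Type*} [Field K] [AddCommGroup g] [Module K g]
    (m : g →ₗ[K] g →ₗ[K] g)
    (N : Module.End K g) (hN : NijFn (fun x y => m x y) N) :
    ∀ (k l : ℕ) (x y : g),
      (fun a : g => (N ^ l) a) (deform (fun x y => m x y) (fun a : g => (N ^ (k + l)) a) x y) =
      deform (fun x y => m x y) (fun a : g => (N ^ k) a) ((fun a : g => (N ^ l) a) x) ((fun a : g => (N ^ l) a) y) :=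
  hN.pow_map_deform_pow_add

/-- `N^l` is a pre-Lie algebra homomorphism from `(g, ·_{N^{k+l}})`
to `(g, ·_{N^k})`. -/
theorem power_deform_hom {K g : Type*} [Field K] [AddCommGroup g] [Module K g]
    (m : g →ₗ[K] g →ₗ[K] g) (hm : PreLieFn (fun x y => m x y))
    (N : Module.End K g) (hN : NijFn (fun x y => m x y) N) :
    ∀ (k l : ℕ) (x y : g),
      (fun a : g => (N ^ l) a) (deform (fun x y => m x y) (fun a : g => (N ^ (k + l)) a) x y) =
      deform (fun x y => m x y) (fun a : g => (N ^ k) a) ((fun a : g => (N ^ l) a) x) ((fun a : g => (N ^ l) a) y) :=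
  power_deform_hom_general m N hN
end

section
/- Let (g, ·) be a pre-Lie algebra and V a finite-dimensional vector space. Then (V; L, R) is a bimodule over g if and only if (V*; L* − R*, −R*) is a bimodule over g, where ⟨L*_x ξ, u⟩ = −⟨ξ, L_x u⟩ and ⟨R*_x ξ, u⟩ = −⟨ξ, R_x u⟩. -/
/-!
Both bimodule identities are identities between operators in `End V`, and the dual pair consists
of the transposes `ξ ↦ ξ ∘ (R x - L x)` and `ξ ↦ ξ ∘ R x`. Transposition is an injective
anti-homomorphism `End V → End V*` (the dual separates the points of a projective module), so the
dual pair is a bimodule iff `(R - L, R)` satisfies the bimodule identities in the opposite ring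
`(End V)ᵐᵒᵖ`. There the right identity is the original right identity, and, writing `ℓ x y` and
`r x y` for the defects of the original left and right identities, the new left defect is
`r x y - r y x - ℓ x y`.
-/

def BimodFn {g V : Type*} [AddCommGroup g] [AddCommGroup V]
    (m : g → g → g) (L R : g → V → V) : Prop :=
  (∀ (x y : g) (u : V), L x (L y u) - L (m x y) u = L y (L x u) - L (m y x) u) ∧
  (∀ (x y : g) (u : V), L x (R y u) - R y (L x u) = R (m x y) u - R y (R x u))

open Module MulOpposite

def IsBimoduleOperators {g A : Type*} [Ring A] (m : g → g → g) (L R : g → A) : Prop :=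
  (∀ x y, L x * L y - L (m x y) = L y * L x - L (m y x)) ∧
  (∀ x y, L x * R y - R y * L x = R (m x y) - R y * R x)

section Ring

variable {g A B : Type*} [Ring A] [Ring B] (m : g → g → g)

theorem isBimoduleOperators_comp_iff {f : A →+* B} (hf : Function.Injective f) (L R : g → A) :
    IsBimoduleOperators m (f ∘ L) (f ∘ R) ↔ IsBimoduleOperators m L R := by
  simp only [IsBimoduleOperators, Function.comp_apply, ← map_mul, ← map_sub, hf.eq_iff]

theorem isBimoduleOperators_op_sub_iff (L R : g → A) :
    IsBimoduleOperators m (fun x => op (R x - L x)) (fun x => op (R x)) ↔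
      IsBimoduleOperators m L R := by
  simp only [IsBimoduleOperators, ← op_mul, ← op_sub, op_inj]
  constructor
  · rintro ⟨hleft, hright⟩
    have hright' x y : L x * R y - R y * L x = R (m x y) - R y * R x := by
      linear_combination (norm := noncomm_ring) hright x y
    refine ⟨fun x y => ?_, hright'⟩
    linear_combination (norm := noncomm_ring) hright' x y - hright' y x - hleft x y
  · rintro ⟨hleft, hright⟩
    refine ⟨fun x y => ?_, fun x y => ?_⟩
    · linear_combination (norm := noncomm_ring) hright x y - hright y x - hleft x y
    · linear_combination (norm := noncomm_ring) hright x y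

end Ring

theorem bimodFn_iff_isBimoduleOperators {S g V : Type*} [Semiring S] [AddCommGroup g]
    [AddCommGroup V] [Module S V] (m : g → g → g) (L R : g → Module.End S V) :
    BimodFn m (fun x => L x) (fun x => R x) ↔ IsBimoduleOperators m L R := by
  simp only [BimodFn, IsBimoduleOperators, LinearMap.ext_iff, LinearMap.sub_apply,
    Module.End.mul_apply]

namespace Module.End

variable {S V : Type*} [CommRing S] [AddCommGroup V] [Module S V]

def dualMapRingHom : (Module.End S V)ᵐᵒᵖ →+* Module.End S (Dual S V) where
  toFun f := f.unop.dualMap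
  map_one' := rfl
  map_mul' _ _ := rfl
  map_zero' := Dual.transpose.map_zero
  map_add' f g := Dual.transpose.map_add f.unop g.unop

@[simp]
theorem dualMapRingHom_apply (f : (Module.End S V)ᵐᵒᵖ) : dualMapRingHom f = f.unop.dualMap :=
  rfl

theorem dualMapRingHom_injective [Projective S V] :
    Function.Injective (dualMapRingHom (S := S) (V := V)) := by
  refine (injective_iff_map_eq_zero _).2 fun f hf => unop_injective (LinearMap.ext fun u => ?_)
  refine (forall_dual_apply_eq_zero_iff S (f.unop u)).1 fun ξ => ?_
  simpa using LinearMap.congr_fun (LinearMap.congr_fun hf ξ) u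

end Module.End

theorem bimodule_iff_dual_bimodule_general {K g V : Type*} [Field K]
    [AddCommGroup g] [Module K g] [AddCommGroup V] [Module K V]
    (m : g →ₗ[K] g →ₗ[K] g)
    (L R : g →ₗ[K] Module.End K V) :
    BimodFn (fun x y => m x y) (fun x u => L x u) (fun x u => R x u) ↔
    BimodFn (fun x y => m x y)
      (fun (x : g) (ξ : Module.Dual K V) => (-(L x).dualMap ξ) - (-(R x).dualMap ξ))
      (fun (x : g) (ξ : Module.Dual K V) => -(-(R x).dualMap ξ)) := by
  have hL : (fun (x : g) (ξ : Dual K V) => (-(L x).dualMap ξ) - (-(R x).dualMap ξ)) =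
      fun x => ⇑(End.dualMapRingHom (op (R x - L x))) := by
    ext x ξ u
    simp only [sub_neg_eq_add, LinearMap.add_apply, LinearMap.neg_apply, LinearMap.dualMap_apply,
      End.dualMapRingHom_apply, unop_op, LinearMap.sub_apply, map_sub]
    ring
  have hR : (fun (x : g) (ξ : Dual K V) => -(-(R x).dualMap ξ)) =
      fun x => ⇑(End.dualMapRingHom (op (R x))) := by
    ext x ξ u
    simp
  rw [hL, hR, bimodFn_iff_isBimoduleOperators, bimodFn_iff_isBimoduleOperators,
    ← isBimoduleOperators_op_sub_iff _ (fun x => L x) (fun x => R x)]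
  -- Naming `B` spares unifying the two `AddCommMonoid` structures on `Dual K V`, which times out.
  exact (isBimoduleOperators_comp_iff (B := Module.End K (Dual K V)) _
    End.dualMapRingHom_injective _ _).symm

/-- `(V; L, R)` is a bimodule over the pre-Lie algebra `g` iff
`(V*; L* − R*, −R*)` is a bimodule over `g`, where `⟨L*_x ξ, u⟩ = −⟨ξ, L_x u⟩`
and `⟨R*_x ξ, u⟩ = −⟨ξ, R_x u⟩`. -/
theorem bimodule_iff_dual_bimodule {K g V : Type*} [Field K]
    [AddCommGroup g] [Module K g] [AddCommGroup V] [Module K V] [FiniteDimensional K V]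
    (m : g →ₗ[K] g →ₗ[K] g) (hm : PreLieFn (fun x y => m x y))
    (L R : g →ₗ[K] Module.End K V) :
    BimodFn (fun x y => m x y) (fun x u => L x u) (fun x u => R x u) ↔
    BimodFn (fun x y => m x y)
      (fun (x : g) (ξ : Module.Dual K V) => (-(L x).dualMap ξ) - (-(R x).dualMap ξ))
      (fun (x : g) (ξ : Module.Dual K V) => -(-(R x).dualMap ξ)) :=
  bimodule_iff_dual_bimodule_general m L R
end

section
/- Let T: V → g be an O-operator on a bimodule (V; L, R) over a pre-Lie algebra (g, ·). Then the operation u ·^T v = L_{T(u)} v + R_{T(v)} u defines a pre-Lie algebra structure on V, and T is a pre-Lie algebra homomorphism from (V, ·^T) to (g, ·). -/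
/-- The O-operator condition. -/
def IsOOp {K g V : Type*} [Field K] [AddCommGroup g] [Module K g]
    [AddCommGroup V] [Module K V]
    (m : g →ₗ[K] g →ₗ[K] g) (L R : g →ₗ[K] Module.End K V) (T : V →ₗ[K] g) : Prop :=
  ∀ u v : V, m (T u) (T v) = T (L (T u) v + R (T v) u)

/-!
Rewriting `T (u ·^T v)` as `T u · T v` and using the second bimodule axiom to replace the
mixed term `R_{T w} L_{T u} v - L_{T u} R_{T w} v` by `R`-terms, the associator `(u, v, w)` of
`·^T` becomes a sum of two `R`-terms exchanged by `u ↔ v` and an `L`-term that is symmetric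
in `u, v` by the first bimodule axiom.
-/

section OOperator

variable {K g V : Type*} [Field K] [AddCommGroup g] [Module K g] [AddCommGroup V] [Module K V]
  {m : g →ₗ[K] g →ₗ[K] g} {L R : g →ₗ[K] Module.End K V} {T : V →ₗ[K] g}

def oopMul (L R : g →ₗ[K] Module.End K V) (T : V →ₗ[K] g) (u v : V) : V :=
  L (T u) v + R (T v) u

theorem IsOOp.map_oopMul (hT : IsOOp m L R T) (u v : V) :
    T (oopMul L R T u v) = m (T u) (T v) :=
  (hT u v).symm

theorem IsOOp.oopMul_associator (hT : IsOOp m L R T)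
    (hLR : ∀ (x y : g) (u : V), L x (R y u) - R y (L x u) = R (m x y) u - R y (R x u))
    (u v w : V) :
    oopMul L R T (oopMul L R T u v) w - oopMul L R T u (oopMul L R T v w) =
      (R (T w) (R (T u) v) - R (m (T u) (T w)) v) + (R (T w) (R (T v) u) - R (m (T v) (T w)) u)
        - (L (T u) (L (T v) w) - L (m (T u) (T v)) w) := by
  have hcomm := hLR (T u) (T w) v
  simp only [oopMul] at hcomm ⊢
  rw [← hT u v, ← hT v w]
  simp only [map_add]
  linear_combination (norm := abel) -hcomm

theorem IsOOp.preLieFn_oopMul (hT : IsOOp m L R T)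
    (hb : BimodFn (fun x y => m x y) (fun x u => L x u) (fun x u => R x u)) :
    PreLieFn (oopMul L R T) := by
  intro u v w
  rw [hT.oopMul_associator hb.2, hT.oopMul_associator hb.2]
  linear_combination (norm := abel) -hb.1 (T u) (T v) w

end OOperator

theorem oop_induced_preLie_general {K g V : Type*} [Field K]
    [AddCommGroup g] [Module K g] [AddCommGroup V] [Module K V]
    (m : g →ₗ[K] g →ₗ[K] g)
    (L R : g →ₗ[K] Module.End K V)
    (hb : BimodFn (fun x y => m x y) (fun x u => L x u) (fun x u => R x u))
    (T : V →ₗ[K] g) (hT : IsOOp m L R T) :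
    PreLieFn (fun u v : V => L (T u) v + R (T v) u) ∧
    (∀ u v : V, T (L (T u) v + R (T v) u) = m (T u) (T v)) :=
  ⟨hT.preLieFn_oopMul hb, hT.map_oopMul⟩

/-- for an O-operator `T`, `u ·^T v = L_{T u} v + R_{T v} u` is a
pre-Lie multiplication on `V` and `T` is a homomorphism to `(g, ·)`. -/
theorem oop_induced_preLie {K g V : Type*} [Field K]
    [AddCommGroup g] [Module K g] [AddCommGroup V] [Module K V]
    (m : g →ₗ[K] g →ₗ[K] g) (hm : PreLieFn (fun x y => m x y))
    (L R : g →ₗ[K] Module.End K V)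
    (hb : BimodFn (fun x y => m x y) (fun x u => L x u) (fun x u => R x u))
    (T : V →ₗ[K] g) (hT : IsOOp m L R T) :
    PreLieFn (fun u v : V => L (T u) v + R (T v) u) ∧
    (∀ u v : V, T (L (T u) v + R (T v) u) = m (T u) (T v)) :=
  oop_induced_preLie_general m L R hb T hT
end

section
/- Let (V; L, R) be a bimodule over a pre-Lie algebra (g, ·), N ∈ gl(g) and S ∈ gl(V). Then N is a Nijenhuis operator on g and S satisfies L_{N(x)}S(v) = S(L_{N(x)}v + L_x S(v) − S(L_x v)) and R_{N(x)}S(v) = S(R_{N(x)}v + R_x S(v) − S(R_x v)) for all x ∈ g, v ∈ V, if and only if N + S (acting diagonally) is a Nijenhuis operator on the semidirect product pre-Lie algebra g ⋉_{L,R} V. -/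
section NijenhuisPair

variable {g V : Type*} [AddCommGroup V]

/-- `NijFn m N` is `IsNijenhuisPair m N N`; `IsNijenhuisPair L N S` is the compatibility of `S`
with the action `L`. -/
def IsNijenhuisPair (A : g → V → V) (N : g → g) (S : V → V) : Prop :=
  ∀ x v, A (N x) (S v) = S (A (N x) v + A x (S v) - S (A x v))

def nijenhuisDefect (A : g → V → V) (N : g → g) (S : V → V) (x : g) (v : V) : V :=
  A (N x) (S v) - S (A (N x) v + A x (S v) - S (A x v))

theorem isNijenhuisPair_iff_nijenhuisDefect_eq_zero (A : g → V → V) (N : g → g) (S : V → V) :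
    IsNijenhuisPair A N S ↔ ∀ x v, nijenhuisDefect A N S x v = 0 := by
  simp only [IsNijenhuisPair, nijenhuisDefect, sub_eq_zero]

end NijenhuisPair

section Semidirect

variable {K g V : Type*} [CommSemiring K] [AddCommGroup g] [Module K g] [AddCommGroup V] [Module K V]

def semidirectMul (m : g →ₗ[K] g →ₗ[K] g) (L R : g →ₗ[K] Module.End K V) (p q : g × V) : g × V :=
  (m p.1 q.1, L p.1 q.2 + R q.1 p.2)

variable (m : g →ₗ[K] g →ₗ[K] g) (L R : g →ₗ[K] Module.End K V) (N : Module.End K g)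
  (S : Module.End K V)

theorem nijenhuisDefect_semidirectMul (x y : g) (u v : V) :
    nijenhuisDefect (semidirectMul m L R) (Prod.map N S) (Prod.map N S) (x, u) (y, v) =
      (nijenhuisDefect (fun x y => m x y) N N x y,
        nijenhuisDefect (fun x v => L x v) N S x v +
          nijenhuisDefect (fun x u => R x u) N S y u) := by
  ext
  · rfl
  · simp only [nijenhuisDefect, semidirectMul, Prod.map, Prod.snd_sub, Prod.snd_add, map_add,
      map_sub]
    abel

theorem isNijenhuisPair_semidirectMul_iff :
    IsNijenhuisPair (semidirectMul m L R) (Prod.map N S) (Prod.map N S) ↔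
      IsNijenhuisPair (fun x y => m x y) N N ∧ IsNijenhuisPair (fun x v => L x v) N S ∧
        IsNijenhuisPair (fun x u => R x u) N S := by
  simp only [isNijenhuisPair_iff_nijenhuisDefect_eq_zero, Prod.forall,
    nijenhuisDefect_semidirectMul, Prod.mk_eq_zero]
  constructor
  · intro h
    refine ⟨fun x y => (h x 0 y 0).1, fun x v => ?_, fun x u => ?_⟩
    · simpa [nijenhuisDefect] using (h x 0 0 v).2
    · simpa [nijenhuisDefect] using (h 0 u x 0).2
  · rintro ⟨hN, hL, hR⟩ x u y v
    simp [hN, hL, hR]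

end Semidirect

theorem nijenhuis_pair_iff_semidirect_nijenhuis_general {K g V : Type*} [Field K]
    [AddCommGroup g] [Module K g] [AddCommGroup V] [Module K V]
    (m : g →ₗ[K] g →ₗ[K] g)
    (L R : g →ₗ[K] Module.End K V)
    (N : Module.End K g) (S : Module.End K V) :
    (NijFn (fun x y => m x y) N ∧
      (∀ (x : g) (v : V), L (N x) (S v) = S (L (N x) v + L x (S v) - S (L x v))) ∧
      (∀ (x : g) (v : V), R (N x) (S v) = S (R (N x) v + R x (S v) - S (R x v)))) ↔
    NijFn (fun p q : g × V => (m p.1 q.1, L p.1 q.2 + R q.1 p.2))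
      (fun p : g × V => (N p.1, S p.2)) :=
  (isNijenhuisPair_semidirectMul_iff m L R N S).symm

/-- `N` is Nijenhuis on `g` and `S` satisfies the two compatibility
conditions iff `N + S` (acting diagonally) is a Nijenhuis operator on the
semidirect product pre-Lie algebra `g ⋉ V`. -/
theorem nijenhuis_pair_iff_semidirect_nijenhuis {K g V : Type*} [Field K]
    [AddCommGroup g] [Module K g] [AddCommGroup V] [Module K V]
    (m : g →ₗ[K] g →ₗ[K] g) (hm : PreLieFn (fun x y => m x y))
    (L R : g →ₗ[K] Module.End K V)
    (hb : BimodFn (fun x y => m x y) (fun x u => L x u) (fun x u => R x u))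
    (N : Module.End K g) (S : Module.End K V) :
    (NijFn (fun x y => m x y) N ∧
      (∀ (x : g) (v : V), L (N x) (S v) = S (L (N x) v + L x (S v) - S (L x v))) ∧
      (∀ (x : g) (v : V), R (N x) (S v) = S (R (N x) v + R x (S v) - S (R x v)))) ↔
    NijFn (fun p q : g × V => (m p.1 q.1, L p.1 q.2 + R q.1 p.2))
      (fun p : g × V => (N p.1, S p.2)) :=
  nijenhuis_pair_iff_semidirect_nijenhuis_general m L R N S
end

section
/- Let (T, N, S) be an ON-structure on a bimodule (V; L, R) over a pre-Lie algebra (g, ·). Then S is a Nijenhuis operator on the pre-Lie algebra (V, ·^T), i.e., S(u) ·^T S(v) = S(S(u) ·^T v + u ·^T S(v) − S(u ·^T v)) for all u,v ∈ V. -/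
/-!
Using `N ∘ T = T ∘ S`, the compatibility condition says that `S u ·^T v + u ·^T S v - S (u ·^T v)`
is the product `u ·^{T ∘ S} v`. Comparing it at `(u, S v)` with the left `(N, S)`-compatibility at
`x = T u` shows `S u ·^T S v = S (u ·^{T ∘ S} v)`, which is the Nijenhuis identity.
-/

section OOperatorProduct

variable {g V : Type*} [AddCommGroup V]

/-- The product `u ·^T v`. -/
def oOpMul (L R : g → V → V) (T : V → g) (u v : V) : V := L (T u) v + R (T v) u

theorem oOpMul_comp_eq_of_compat {L R : g → V → V} {T : V → g} {S : V →+ V} {N : g → g}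
    (hNT : ∀ v, N (T v) = T (S v))
    (hmul : ∀ u v, oOpMul L R (N ∘ T) u v =
      oOpMul L R T (S u) v + oOpMul L R T u (S v) - S (oOpMul L R T u v))
    (u v : V) :
    oOpMul L R (T ∘ S) u v =
      oOpMul L R T (S u) v + oOpMul L R T u (S v) - S (oOpMul L R T u v) := by
  rw [← hmul]
  simp only [oOpMul, Function.comp_apply, hNT]

theorem oOpMul_map_map {L R : g → V → V} {T : V → g} {S : V →+ V} {N : g → g}
    (hLS : ∀ x v, L (N x) (S v) = S (L (N x) v) + L x (S (S v)) - S (L x (S v)))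
    (hNT : ∀ v, N (T v) = T (S v))
    (hmul : ∀ u v, oOpMul L R (T ∘ S) u v =
      oOpMul L R T (S u) v + oOpMul L R T u (S v) - S (oOpMul L R T u v))
    (u v : V) :
    oOpMul L R T (S u) (S v) = S (oOpMul L R (T ∘ S) u v) := by
  have hL := hLS (T u) v
  have hSv := hmul u (S v)
  rw [hNT] at hL
  simp only [oOpMul, Function.comp_apply, map_add] at hSv ⊢
  linear_combination (norm := abel) hL - hSv

end OOperatorProduct

theorem on_structure_S_nijenhuis_general {K g V : Type*} [Field K]
    [AddCommGroup g] [Module K g] [AddCommGroup V] [Module K V]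
    (L R : g →ₗ[K] Module.End K V)
    (T : V →ₗ[K] g)
    (N : Module.End K g) (S : Module.End K V)
    (hLS : ∀ (x : g) (v : V),
      L (N x) (S v) = S (L (N x) v) + L x (S (S v)) - S (L x (S v)))
    (hNT : ∀ v : V, N (T v) = T (S v))
    (hmul : ∀ u v : V,
      L (N (T u)) v + R (N (T v)) u =
      (L (T (S u)) v + R (T v) (S u)) + (L (T u) (S v) + R (T (S v)) u) -
        S (L (T u) v + R (T v) u)) :
    NijFn (fun u v : V => L (T u) v + R (T v) u) S := by
  intro u v
  have hcomp := oOpMul_comp_eq_of_compat (L := fun x => L x) (R := fun x => R x)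
    (S := S.toAddMonoidHom) hNT hmul
  exact (oOpMul_map_map (S := S.toAddMonoidHom) hLS hNT hcomp u v).trans
    (congrArg S (hcomp u v))

/-- for an ON-structure (T,N,S), S is a Nijenhuis operator on the
pre-Lie algebra (V, ·^T). -/
theorem on_structure_S_nijenhuis {K g V : Type*} [Field K]
    [AddCommGroup g] [Module K g] [AddCommGroup V] [Module K V]
    (m : g →ₗ[K] g →ₗ[K] g) (hm : PreLieFn (fun x y => m x y))
    (L R : g →ₗ[K] Module.End K V)
    (hb : BimodFn (fun x y => m x y) (fun x u => L x u) (fun x u => R x u))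
    (T : V →ₗ[K] g) (hT : IsOOp m L R T)
    (N : Module.End K g) (S : Module.End K V)
    (hN : NijFn (fun x y => m x y) N)
    (hLS : ∀ (x : g) (v : V),
      L (N x) (S v) = S (L (N x) v) + L x (S (S v)) - S (L x (S v)))
    (hRS : ∀ (x : g) (v : V),
      R (N x) (S v) = S (R (N x) v) + R x (S (S v)) - S (R x (S v)))
    (hNT : ∀ v : V, N (T v) = T (S v))
    (hmul : ∀ u v : V,
      L (N (T u)) v + R (N (T v)) u =
      (L (T (S u)) v + R (T v) (S u)) + (L (T u) (S v) + R (T (S v)) u) -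
        S (L (T u) v + R (T v) u)) :
    NijFn (fun u v : V => L (T u) v + R (T v) u) S :=
  on_structure_S_nijenhuis_general L R T N S hLS hNT hmul
end

section
/- Let (T, N, S) be an ON-structure on a bimodule (V; L, R) over a pre-Lie algebra (g, ·). Then N ∘ T is an O-operator on the bimodule (V; L, R) over (g, ·). -/
section

variable {K g V : Type*} [Field K] [AddCommGroup g] [Module K g] [AddCommGroup V] [Module K V]
  {m : g →ₗ[K] g →ₗ[K] g} {L R : g →ₗ[K] Module.End K V} {T : V →ₗ[K] g}

/-- The left side is the Nijenhuis-deformed product `T u ·_N T v`; the argument of `T` on the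
right is the paper's `S u ·ᵀ v + u ·ᵀ S v - S (u ·ᵀ v)`. -/
theorem IsOOp.deformedMul_eq {N : Module.End K g} {S : Module.End K V} (hT : IsOOp m L R T)
    (hNT : ∀ v : V, N (T v) = T (S v)) (u v : V) :
    m (N (T u)) (T v) + m (T u) (N (T v)) - N (m (T u) (T v)) =
      T ((L (T (S u)) v + R (T v) (S u)) + (L (T u) (S v) + R (T (S v)) u) -
        S (L (T u) v + R (T v) u)) := by
  rw [hNT u, hNT v, hT (S u) v, hT u (S v), hT u v, hNT, ← map_add, ← map_sub]

end

theorem on_structure_NT_is_O_operator_general {K g V : Type*} [Field K]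
    [AddCommGroup g] [Module K g] [AddCommGroup V] [Module K V]
    (m : g →ₗ[K] g →ₗ[K] g)
    (L R : g →ₗ[K] Module.End K V)
    (T : V →ₗ[K] g) (hT : IsOOp m L R T)
    (N : Module.End K g) (S : Module.End K V)
    (hN : NijFn (fun x y => m x y) N)
    (hNT : ∀ v : V, N (T v) = T (S v))
    (hmul : ∀ u v : V,
      L (N (T u)) v + R (N (T v)) u =
      (L (T (S u)) v + R (T v) (S u)) + (L (T u) (S v) + R (T (S v)) u) -
        S (L (T u) v + R (T v) u)) :
    IsOOp m L R (N ∘ₗ T) := by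
  intro u v
  calc m (N (T u)) (N (T v))
      = N (m (N (T u)) (T v) + m (T u) (N (T v)) - N (m (T u) (T v))) := hN (T u) (T v)
    _ = N (T (L (N (T u)) v + R (N (T v)) u)) := by rw [hT.deformedMul_eq hNT, hmul]

/-- for an ON-structure (T,N,S), N ∘ T is an O-operator on
(V; L, R) over (g, ·). -/
theorem on_structure_NT_is_O_operator {K g V : Type*} [Field K]
    [AddCommGroup g] [Module K g] [AddCommGroup V] [Module K V]
    (m : g →ₗ[K] g →ₗ[K] g) (hm : PreLieFn (fun x y => m x y))
    (L R : g →ₗ[K] Module.End K V)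
    (hb : BimodFn (fun x y => m x y) (fun x u => L x u) (fun x u => R x u))
    (T : V →ₗ[K] g) (hT : IsOOp m L R T)
    (N : Module.End K g) (S : Module.End K V)
    (hN : NijFn (fun x y => m x y) N)
    (hLS : ∀ (x : g) (v : V),
      L (N x) (S v) = S (L (N x) v) + L x (S (S v)) - S (L x (S v)))
    (hRS : ∀ (x : g) (v : V),
      R (N x) (S v) = S (R (N x) v) + R x (S (S v)) - S (R x (S v)))
    (hNT : ∀ v : V, N (T v) = T (S v))
    (hmul : ∀ u v : V,
      L (N (T u)) v + R (N (T v)) u =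
      (L (T (S u)) v + R (T v) (S u)) + (L (T u) (S v) + R (T (S v)) u) -
        S (L (T u) v + R (T v) u)) :
    IsOOp m L R (N ∘ₗ T) :=
  on_structure_NT_is_O_operator_general m L R T hT N S hN hNT hmul
end

section
/- Let (T, N, S) be an ON-structure on a bimodule (V; L, R) over a pre-Lie algebra (g, ·). Then T and N ∘ T are compatible O-operators: for any scalars k₁, k₂, the map k₁T + k₂(N∘T) is also an O-operator on (V; L, R). -/
/-!
Evaluating the Nijenhuis identity of `N` at `T u, T v` gives
`N (T u) · N (T v) = N (N (T u) · T v + T u · N (T v) - N (T u · T v))`. Using `N ∘ T = T ∘ S`,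
the O-operator identity of `T` and the formula for `·^{N∘T}`, the argument of the outer `N` is
`T (u ·^{N∘T} v)`, so `N ∘ T` is an O-operator. The same identity is precisely the mixed term
of the O-operator identity for `k₁ T + k₂ (N ∘ T)`.
-/

/-- The product `u ·^T v` induced on `V` by `T`. -/
def oProduct {K g V : Type*} [Field K] [AddCommGroup g] [Module K g] [AddCommGroup V]
    [Module K V] (L R : g →ₗ[K] Module.End K V) (T : V →ₗ[K] g) (u v : V) : V :=
  L (T u) v + R (T v) u

section

variable {K g V : Type*} [Field K] [AddCommGroup g] [Module K g] [AddCommGroup V] [Module K V]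
  {m : g →ₗ[K] g →ₗ[K] g} {L R : g →ₗ[K] Module.End K V}

theorem IsOOp.smul_add_smul {T₁ T₂ : V →ₗ[K] g}
    (h₁ : IsOOp m L R T₁) (h₂ : IsOOp m L R T₂)
    (hcross : ∀ u v : V, m (T₁ u) (T₂ v) + m (T₂ u) (T₁ v) =
      T₁ (oProduct L R T₂ u v) + T₂ (oProduct L R T₁ u v))
    (k₁ k₂ : K) : IsOOp m L R (k₁ • T₁ + k₂ • T₂) := by
  intro u v
  have expand : m ((k₁ • T₁ + k₂ • T₂) u) ((k₁ • T₁ + k₂ • T₂) v) =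
      (k₁ * k₁) • m (T₁ u) (T₁ v) + (k₁ * k₂) • (m (T₁ u) (T₂ v) + m (T₂ u) (T₁ v)) +
        (k₂ * k₂) • m (T₂ u) (T₂ v) := by
    simp only [LinearMap.add_apply, LinearMap.smul_apply, map_add, map_smul]
    module
  rw [expand, h₁ u v, h₂ u v, hcross u v]
  simp only [oProduct, LinearMap.add_apply, LinearMap.smul_apply, map_add, map_smul]
  module

variable {T : V →ₗ[K] g} {N : Module.End K g} {S : Module.End K V}

theorem IsOOp.deformed_mul_eq_map_oProduct (hT : IsOOp m L R T) (hNT : ∀ v : V, N (T v) = T (S v))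
    (hmul : ∀ u v : V, oProduct L R (N ∘ₗ T) u v =
      oProduct L R T (S u) v + oProduct L R T u (S v) - S (oProduct L R T u v))
    (u v : V) :
    m (N (T u)) (T v) + m (T u) (N (T v)) - N (m (T u) (T v)) =
      T (oProduct L R (N ∘ₗ T) u v) := by
  rw [hmul u v, hNT u, hNT v, hT u v, hT (S u) v, hT u (S v), hNT]
  simp only [oProduct, map_add, map_sub]

theorem IsOOp.nijenhuis_comp (hT : IsOOp m L R T) (hN : NijFn (fun x y => m x y) N)
    (hNT : ∀ v : V, N (T v) = T (S v))
    (hmul : ∀ u v : V, oProduct L R (N ∘ₗ T) u v =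
      oProduct L R T (S u) v + oProduct L R T u (S v) - S (oProduct L R T u v)) :
    IsOOp m L R (N ∘ₗ T) := by
  intro u v
  have h := hN (T u) (T v)
  rw [hT.deformed_mul_eq_map_oProduct hNT hmul u v] at h
  exact h

theorem IsOOp.mixed_nijenhuis_comp (hT : IsOOp m L R T) (hNT : ∀ v : V, N (T v) = T (S v))
    (hmul : ∀ u v : V, oProduct L R (N ∘ₗ T) u v =
      oProduct L R T (S u) v + oProduct L R T u (S v) - S (oProduct L R T u v))
    (u v : V) :
    m (T u) ((N ∘ₗ T) v) + m ((N ∘ₗ T) u) (T v) =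
      T (oProduct L R (N ∘ₗ T) u v) + (N ∘ₗ T) (oProduct L R T u v) := by
  rw [← hT.deformed_mul_eq_map_oProduct hNT hmul u v, LinearMap.comp_apply, LinearMap.comp_apply,
    LinearMap.comp_apply, oProduct, ← hT u v]
  abel

end

theorem on_structure_compatible_O_operators_general {K g V : Type*} [Field K]
    [AddCommGroup g] [Module K g] [AddCommGroup V] [Module K V]
    (m : g →ₗ[K] g →ₗ[K] g)
    (L R : g →ₗ[K] Module.End K V)
    (T : V →ₗ[K] g) (hT : IsOOp m L R T)
    (N : Module.End K g) (S : Module.End K V)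
    (hN : NijFn (fun x y => m x y) N)
    (hNT : ∀ v : V, N (T v) = T (S v))
    (hmul : ∀ u v : V,
      L (N (T u)) v + R (N (T v)) u =
      (L (T (S u)) v + R (T v) (S u)) + (L (T u) (S v) + R (T (S v)) u) -
        S (L (T u) v + R (T v) u)) :
    ∀ k₁ k₂ : K, IsOOp m L R (k₁ • T + k₂ • (N ∘ₗ T)) :=
  hT.smul_add_smul (hT.nijenhuis_comp hN hNT hmul) (hT.mixed_nijenhuis_comp hNT hmul)

/-- for an ON-structure (T,N,S), T and N∘T are compatible
O-operators: every linear combination k₁T + k₂(N∘T) is an O-operator. -/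
theorem on_structure_compatible_O_operators {K g V : Type*} [Field K]
    [AddCommGroup g] [Module K g] [AddCommGroup V] [Module K V]
    (m : g →ₗ[K] g →ₗ[K] g) (hm : PreLieFn (fun x y => m x y))
    (L R : g →ₗ[K] Module.End K V)
    (hb : BimodFn (fun x y => m x y) (fun x u => L x u) (fun x u => R x u))
    (T : V →ₗ[K] g) (hT : IsOOp m L R T)
    (N : Module.End K g) (S : Module.End K V)
    (hN : NijFn (fun x y => m x y) N)
    (hLS : ∀ (x : g) (v : V),
      L (N x) (S v) = S (L (N x) v) + L x (S (S v)) - S (L x (S v)))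
    (hRS : ∀ (x : g) (v : V),
      R (N x) (S v) = S (R (N x) v) + R x (S (S v)) - S (R x (S v)))
    (hNT : ∀ v : V, N (T v) = T (S v))
    (hmul : ∀ u v : V,
      L (N (T u)) v + R (N (T v)) u =
      (L (T (S u)) v + R (T v) (S u)) + (L (T u) (S v) + R (T (S v)) u) -
        S (L (T u) v + R (T v) u)) :
    ∀ k₁ k₂ : K, IsOOp m L R (k₁ • T + k₂ • (N ∘ₗ T)) :=
  on_structure_compatible_O_operators_general m L R T hT N S hN hNT hmul
end

section
/- Let T₁, T₂: V → g be compatible O-operators on a bimodule (V; L, R) over a pre-Lie algebra (g, ·), with T₂ invertible. Then N = T₁ ∘ T₂⁻¹ is a Nijenhuis operator on (g, ·). -/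
section

variable {K g V : Type*} [Field K] [AddCommGroup g] [Module K g] [AddCommGroup V] [Module K V]
  {m : g →ₗ[K] g →ₗ[K] g} {L R : g →ₗ[K] Module.End K V}

theorem IsOOp.cross_of_add {T₁ T₂ : V →ₗ[K] g} (h₁ : IsOOp m L R T₁) (h₂ : IsOOp m L R T₂)
    (h₁₂ : IsOOp m L R (T₁ + T₂)) (u v : V) :
    m (T₁ u) (T₂ v) + m (T₂ u) (T₁ v) =
      T₁ (L (T₂ u) v + R (T₂ v) u) + T₂ (L (T₁ u) v + R (T₁ v) u) := by
  have h := h₁₂ u v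
  simp only [LinearMap.add_apply, map_add] at h
  rw [h₁ u v, h₂ u v] at h
  simp only [map_add] at h ⊢
  rw [← sub_eq_zero] at h ⊢
  rw [← h]
  abel

theorem IsOOp.symm_apply_mul {e : V ≃ₗ[K] g} (he : IsOOp m L R (e : V →ₗ[K] g)) (x y : g) :
    e.symm (m x y) = L x (e.symm y) + R y (e.symm x) := by
  have h := he (e.symm x) (e.symm y)
  simp only [LinearEquiv.coe_coe, LinearEquiv.apply_symm_apply] at h
  rw [h, LinearEquiv.symm_apply_apply]

end

theorem compatible_O_operators_nijenhuis_general {K g V : Type*} [Field K]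
    [AddCommGroup g] [Module K g] [AddCommGroup V] [Module K V]
    (m : g →ₗ[K] g →ₗ[K] g)
    (L R : g →ₗ[K] Module.End K V)
    (T₁ : V →ₗ[K] g) (e : V ≃ₗ[K] g)
    (hT₁ : IsOOp m L R T₁) (hT₂ : IsOOp m L R (e : V →ₗ[K] g))
    (hcompat : ∀ k₁ k₂ : K, IsOOp m L R (k₁ • T₁ + k₂ • (e : V →ₗ[K] g))) :
    NijFn (fun x y => m x y) (fun x : g => T₁ (e.symm x)) := by
  intro x y
  set u := e.symm x
  set v := e.symm y
  have hsum : IsOOp m L R (T₁ + (e : V →ₗ[K] g)) := by simpa using hcompat 1 1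
  have hcross := hT₁.cross_of_add hT₂ hsum u v
  simp only [LinearEquiv.coe_coe, LinearEquiv.apply_symm_apply, u, v] at hcross
  have hdefect : m (T₁ u) y + m x (T₁ v) - T₁ (e.symm (m x y)) =
      e (L (T₁ u) v + R (T₁ v) u) := by
    rw [hT₂.symm_apply_mul, hcross, add_sub_cancel_left]
  change m (T₁ u) (T₁ v) = T₁ (e.symm (m (T₁ u) y + m x (T₁ v) - T₁ (e.symm (m x y))))
  rw [hdefect, LinearEquiv.symm_apply_apply, hT₁ u v]

/-- if T₁, T₂ are compatible O-operators with T₂ invertible, then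
N = T₁ ∘ T₂⁻¹ is a Nijenhuis operator on (g, ·). -/
theorem compatible_O_operators_nijenhuis {K g V : Type*} [Field K]
    [AddCommGroup g] [Module K g] [AddCommGroup V] [Module K V]
    (m : g →ₗ[K] g →ₗ[K] g) (hm : PreLieFn (fun x y => m x y))
    (L R : g →ₗ[K] Module.End K V)
    (hb : BimodFn (fun x y => m x y) (fun x u => L x u) (fun x u => R x u))
    (T₁ : V →ₗ[K] g) (e : V ≃ₗ[K] g)
    (hT₁ : IsOOp m L R T₁) (hT₂ : IsOOp m L R (e : V →ₗ[K] g))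
    (hcompat : ∀ k₁ k₂ : K, IsOOp m L R (k₁ • T₁ + k₂ • (e : V →ₗ[K] g))) :
    NijFn (fun x y => m x y) (fun x : g => T₁ (e.symm x)) :=
  compatible_O_operators_nijenhuis_general m L R T₁ e hT₁ hT₂ hcompat
end

section
/- Let T₁, T₂: V → g be compatible O-operators on a bimodule (V; L, R) over a pre-Lie algebra (g, ·), with T₂ invertible. Then setting N = T₁T₂⁻¹ and S = T₂⁻¹T₁, the pair (N, S) is a Nijenhuis structure on the bimodule, i.e., N is a Nijenhuis operator on g and L_{N(x)}S(v) = S(L_{N(x)}v) + L_x S²(v) − S(L_x S(v)) and R_{N(x)}S(v) = S(R_{N(x)}v) + R_x S²(v) − S(R_x S(v)) for all x ∈ g, v ∈ V; moreover (T₂, N, S) is an ON-structure (T₂∘S = N∘T₂ and u·^{N∘T₂}v = S(u)·^{T₂}v + u·^{T₂}S(v) − S(u·^{T₂}v)). -/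
namespace IsOOp

variable {K g V : Type*} [Field K] [AddCommGroup g] [Module K g] [AddCommGroup V] [Module K V]
  {m : g →ₗ[K] g →ₗ[K] g} {L R : g →ₗ[K] Module.End K V}

theorem cross_of_add_s14 {T₁ T₂ : V →ₗ[K] g} (h₁ : IsOOp m L R T₁) (h₂ : IsOOp m L R T₂)
    (h : IsOOp m L R (T₁ + T₂)) (u v : V) :
    m (T₁ u) (T₂ v) + m (T₂ u) (T₁ v) =
      T₁ (L (T₂ u) v + R (T₂ v) u) + T₂ (L (T₁ u) v + R (T₁ v) u) := by
  have h₁₂ := h u v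
  have h₁' := h₁ u v
  have h₂' := h₂ u v
  simp only [LinearMap.add_apply, map_add] at h₁₂ h₁' h₂' ⊢
  linear_combination (norm := abel) h₁₂ - h₁' - h₂'

variable {T : V →ₗ[K] g} {e : V ≃ₗ[K] g}

theorem apply_product_self (hT : IsOOp m L R T) (he : IsOOp m L R e) (u v : V) :
    T (L (T u) v + R (T v) u) = e (L (T u) (e.symm (T v)) + R (T v) (e.symm (T u))) := by
  have he' := he (e.symm (T u)) (e.symm (T v))
  simp only [LinearEquiv.coe_coe, LinearEquiv.apply_symm_apply] at he'
  rw [← hT, he']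

theorem apply_product_equiv (hT : IsOOp m L R T) (he : IsOOp m L R e)
    (hadd : IsOOp m L R (T + e)) (u v : V) :
    T (L (e u) v + R (e v) u) = e (L (e u) (e.symm (T v)) + R (e v) (e.symm (T u))) := by
  have hcross := hT.cross_of_add_s14 he hadd u v
  have hleft := he (e.symm (T u)) v
  have hright := he u (e.symm (T v))
  simp only [LinearEquiv.coe_coe, LinearEquiv.apply_symm_apply, map_add] at hcross hleft hright ⊢
  linear_combination (norm := abel) hleft + hright - hcross

theorem nijFn_comp_symm (hT : IsOOp m L R T) (he : IsOOp m L R e)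
    (hadd : IsOOp m L R (T + e)) : NijFn (fun x y => m x y) (fun x => T (e.symm x)) := by
  intro x y
  obtain ⟨u, rfl⟩ := e.surjective x
  obtain ⟨v, rfl⟩ := e.surjective y
  have hdeform : m (T u) (e v) + m (e u) (T v) - T (e.symm (m (e u) (e v))) =
      e (L (T u) v + R (T v) u) := by
    have hcross := hT.cross_of_add_s14 he hadd u v
    have he' := he u v
    simp only [LinearEquiv.coe_coe] at hcross he'
    rw [he', LinearEquiv.symm_apply_apply]
    linear_combination (norm := abel) hcross
  simp only [LinearEquiv.symm_apply_apply]
  rw [hdeform, LinearEquiv.symm_apply_apply, hT]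

theorem nijenhuis_left_comp_symm (hT : IsOOp m L R T) (he : IsOOp m L R e)
    (hadd : IsOOp m L R (T + e)) (x : g) (v : V) :
    L (T (e.symm x)) (e.symm (T v)) =
      e.symm (T (L (T (e.symm x)) v)) + L x (e.symm (T (e.symm (T v)))) -
        e.symm (T (L x (e.symm (T v)))) := by
  obtain ⟨u, rfl⟩ := e.surjective x
  apply e.injective
  have hequiv := hT.apply_product_equiv he hadd u (e.symm (T v))
  have hself := hT.apply_product_self he u v
  simp only [LinearEquiv.apply_symm_apply, map_add] at hequiv hself
  simp only [map_add, map_sub, LinearEquiv.apply_symm_apply, LinearEquiv.symm_apply_apply]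
  linear_combination (norm := abel) hequiv - hself

theorem nijenhuis_right_comp_symm (hT : IsOOp m L R T) (he : IsOOp m L R e)
    (hadd : IsOOp m L R (T + e)) (x : g) (v : V) :
    R (T (e.symm x)) (e.symm (T v)) =
      e.symm (T (R (T (e.symm x)) v)) + R x (e.symm (T (e.symm (T v)))) -
        e.symm (T (R x (e.symm (T v)))) := by
  obtain ⟨u, rfl⟩ := e.surjective x
  apply e.injective
  have hequiv := hT.apply_product_equiv he hadd (e.symm (T v)) u
  have hself := hT.apply_product_self he v u
  simp only [LinearEquiv.apply_symm_apply, map_add] at hequiv hself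
  simp only [map_add, map_sub, LinearEquiv.apply_symm_apply, LinearEquiv.symm_apply_apply]
  linear_combination (norm := abel) hequiv - hself

theorem on_product_comp_symm (hT : IsOOp m L R T) (he : IsOOp m L R e)
    (hadd : IsOOp m L R (T + e)) (u v : V) :
    L (T (e.symm (e u))) v + R (T (e.symm (e v))) u =
      (L (e (e.symm (T u))) v + R (e v) (e.symm (T u))) +
      (L (e u) (e.symm (T v)) + R (e (e.symm (T v))) u) -
      e.symm (T (L (e u) v + R (e v) u)) := by
  rw [hT.apply_product_equiv he hadd]
  simp only [LinearEquiv.symm_apply_apply, LinearEquiv.apply_symm_apply, map_add]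
  abel

end IsOOp

theorem compatible_O_operators_ON_structure_general {K g V : Type*} [Field K]
    [AddCommGroup g] [Module K g] [AddCommGroup V] [Module K V]
    (m : g →ₗ[K] g →ₗ[K] g)
    (L R : g →ₗ[K] Module.End K V)
    (T₁ : V →ₗ[K] g) (e : V ≃ₗ[K] g)
    (hT₁ : IsOOp m L R T₁) (hT₂ : IsOOp m L R (e : V →ₗ[K] g))
    (hcompat : ∀ k₁ k₂ : K, IsOOp m L R (k₁ • T₁ + k₂ • (e : V →ₗ[K] g))) :
    NijFn (fun x y => m x y) (fun x : g => T₁ (e.symm x)) ∧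
    (∀ (x : g) (v : V),
      L (T₁ (e.symm x)) (e.symm (T₁ v)) =
        e.symm (T₁ (L (T₁ (e.symm x)) v)) + L x (e.symm (T₁ (e.symm (T₁ v)))) -
          e.symm (T₁ (L x (e.symm (T₁ v))))) ∧
    (∀ (x : g) (v : V),
      R (T₁ (e.symm x)) (e.symm (T₁ v)) =
        e.symm (T₁ (R (T₁ (e.symm x)) v)) + R x (e.symm (T₁ (e.symm (T₁ v)))) -
          e.symm (T₁ (R x (e.symm (T₁ v))))) ∧
    (∀ v : V, e (e.symm (T₁ v)) = T₁ (e.symm (e v))) ∧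
    (∀ u v : V,
      L (T₁ (e.symm (e u))) v + R (T₁ (e.symm (e v))) u =
        (L (e (e.symm (T₁ u))) v + R (e v) (e.symm (T₁ u))) +
        (L (e u) (e.symm (T₁ v)) + R (e (e.symm (T₁ v))) u) -
        e.symm (T₁ (L (e u) v + R (e v) u))) := by
  have hadd : IsOOp m L R (T₁ + e) := by simpa only [one_smul] using hcompat 1 1
  exact ⟨hT₁.nijFn_comp_symm hT₂ hadd, hT₁.nijenhuis_left_comp_symm hT₂ hadd,
    hT₁.nijenhuis_right_comp_symm hT₂ hadd, fun v => by simp, hT₁.on_product_comp_symm hT₂ hadd⟩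

/-- if T₁, T₂ are compatible O-operators with T₂ invertible, then
with N = T₁T₂⁻¹ and S = T₂⁻¹T₁, (N,S) is a Nijenhuis structure and (T₂, N, S)
is an ON-structure. -/
theorem compatible_O_operators_ON_structure {K g V : Type*} [Field K]
    [AddCommGroup g] [Module K g] [AddCommGroup V] [Module K V]
    (m : g →ₗ[K] g →ₗ[K] g) (hm : PreLieFn (fun x y => m x y))
    (L R : g →ₗ[K] Module.End K V)
    (hb : BimodFn (fun x y => m x y) (fun x u => L x u) (fun x u => R x u))
    (T₁ : V →ₗ[K] g) (e : V ≃ₗ[K] g)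
    (hT₁ : IsOOp m L R T₁) (hT₂ : IsOOp m L R (e : V →ₗ[K] g))
    (hcompat : ∀ k₁ k₂ : K, IsOOp m L R (k₁ • T₁ + k₂ • (e : V →ₗ[K] g))) :
    NijFn (fun x y => m x y) (fun x : g => T₁ (e.symm x)) ∧
    (∀ (x : g) (v : V),
      L (T₁ (e.symm x)) (e.symm (T₁ v)) =
        e.symm (T₁ (L (T₁ (e.symm x)) v)) + L x (e.symm (T₁ (e.symm (T₁ v)))) -
          e.symm (T₁ (L x (e.symm (T₁ v))))) ∧
    (∀ (x : g) (v : V),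
      R (T₁ (e.symm x)) (e.symm (T₁ v)) =
        e.symm (T₁ (R (T₁ (e.symm x)) v)) + R x (e.symm (T₁ (e.symm (T₁ v)))) -
          e.symm (T₁ (R x (e.symm (T₁ v))))) ∧
    (∀ v : V, e (e.symm (T₁ v)) = T₁ (e.symm (e v))) ∧
    (∀ u v : V,
      L (T₁ (e.symm (e u))) v + R (T₁ (e.symm (e v))) u =
        (L (e (e.symm (T₁ u))) v + R (e v) (e.symm (T₁ u))) +
        (L (e u) (e.symm (T₁ v)) + R (e (e.symm (T₁ v))) u) -
        e.symm (T₁ (L (e u) v + R (e v) u))) :=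
  compatible_O_operators_ON_structure_general m L R T₁ e hT₁ hT₂ hcompat
end

section
/- Let (T, N, S) be an ON-structure on a bimodule (V; L, R) over a pre-Lie algebra (g,·). Then for all k ∈ ℕ, T_k = N^k ∘ T is an O-operator, and for all k, l ∈ ℕ, T_k and T_l are compatible (any linear combination of T_k and T_l is an O-operator). -/
theorem lie_iterate_eq_lie_mul_pow {A X : Type*} [Ring A] (S : A) (f : X → A) (σ : X → X)
    (h : ∀ x, ⁅S, f (σ x)⁆ = ⁅S, f x⁆ * S) (p : ℕ) (x : X) :
    ⁅S, f (σ^[p] x)⁆ = ⁅S, f x⁆ * S ^ p := by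
  induction p generalizing x with
  | zero => simp
  | succ p ih => rw [Function.iterate_succ_apply, ih, h, mul_assoc, pow_succ']

section OOperator

variable {K g V : Type*} [Field K] [AddCommGroup g] [Module K g] [AddCommGroup V] [Module K V]
  (m : g →ₗ[K] g →ₗ[K] g) (L R : g →ₗ[K] Module.End K V)

theorem isOOp_smul_add_smul {P Q : V →ₗ[K] g} (hP : IsOOp m L R P) (hQ : IsOOp m L R Q)
    (hPQ : ∀ u v, m (P u) (Q v) + m (Q u) (P v) =
      P (L (Q u) v + R (Q v) u) + Q (L (P u) v + R (P v) u)) (a b : K) :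
    IsOOp m L R (a • P + b • Q) := by
  intro u v
  have hP' := hP u v
  have hQ' := hQ u v
  have hPQ' := hPQ u v
  simp only [LinearMap.add_apply, LinearMap.smul_apply, map_add, map_smul] at hP' hQ' hPQ' ⊢
  linear_combination (norm := module) (a * a) • hP' + (a * b) • hPQ' + (b * b) • hQ'

variable {L R} (T : V →ₗ[K] g) (S : Module.End K V)

theorem lie_left_pow_apply_add_lie_right_pow_apply_eq_zero
    (hL : ∀ u, ⁅S, L (T (S u))⁆ = ⁅S, L (T u)⁆ * S)
    (hR : ∀ v, ⁅S, R (T (S v))⁆ = ⁅S, R (T v)⁆ * S)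
    (hLR : ∀ u v, ⁅S, L (T u)⁆ v + ⁅S, R (T v)⁆ u = 0) (p q : ℕ) (u v : V) :
    ⁅S, L (T ((S ^ p) u))⁆ ((S ^ q) v) + ⁅S, R (T ((S ^ p) v))⁆ ((S ^ q) u) = 0 := by
  have shift {A : g →ₗ[K] Module.End K V}
      (hA : ∀ u, ⁅S, A (T (S u))⁆ = ⁅S, A (T u)⁆ * S) (n : ℕ) (u : V) :
      ⁅S, A (T ((S ^ n) u))⁆ = ⁅S, A (T u)⁆ * S ^ n := by
    rw [Module.End.pow_apply]
    exact lie_iterate_eq_lie_mul_pow S (fun u => A (T u)) S hA n u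
  have hRv : ⁅S, R (T v)⁆ ((S ^ (p + q)) u) = ⁅S, R (T ((S ^ (p + q)) v))⁆ u := by
    rw [shift hR, Module.End.mul_apply]
  rw [shift hL, shift hR, Module.End.mul_apply, Module.End.mul_apply,
    ← Module.End.mul_apply (S ^ p), ← Module.End.mul_apply (S ^ p), ← pow_add, hRv, hLR]

theorem pow_apply_left_add_right
    (hL : ∀ u, ⁅S, L (T (S u))⁆ = ⁅S, L (T u)⁆ * S)
    (hR : ∀ v, ⁅S, R (T (S v))⁆ = ⁅S, R (T v)⁆ * S)
    (hLR : ∀ u v, ⁅S, L (T u)⁆ v + ⁅S, R (T v)⁆ u = 0) (p q : ℕ) (u v : V) :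
    (S ^ q) (L (T ((S ^ p) u)) v + R (T ((S ^ p) v)) u) =
      L (T ((S ^ p) u)) ((S ^ q) v) + R (T ((S ^ p) v)) ((S ^ q) u) := by
  induction q with
  | zero => simp
  | succ q ih =>
    have h := lie_left_pow_apply_add_lie_right_pow_apply_eq_zero T S hL hR hLR p q u v
    simp only [Ring.lie_def, LinearMap.sub_apply, Module.End.mul_apply] at h
    rw [pow_succ', Module.End.mul_apply, Module.End.mul_apply, Module.End.mul_apply, ih, map_add]
    linear_combination (norm := module) h

variable {T S}

theorem isOOp_comp_pow (hT : IsOOp m L R T)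
    (hL : ∀ u, ⁅S, L (T (S u))⁆ = ⁅S, L (T u)⁆ * S)
    (hR : ∀ v, ⁅S, R (T (S v))⁆ = ⁅S, R (T v)⁆ * S)
    (hLR : ∀ u v, ⁅S, L (T u)⁆ v + ⁅S, R (T v)⁆ u = 0) (k : ℕ) :
    IsOOp m L R (T ∘ₗ (S ^ k)) := by
  intro u v
  simp only [LinearMap.comp_apply]
  rw [hT, pow_apply_left_add_right T S hL hR hLR]

theorem isOOp_smul_comp_pow_add_smul_comp_pow (hT : IsOOp m L R T)
    (hL : ∀ u, ⁅S, L (T (S u))⁆ = ⁅S, L (T u)⁆ * S)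
    (hR : ∀ v, ⁅S, R (T (S v))⁆ = ⁅S, R (T v)⁆ * S)
    (hLR : ∀ u v, ⁅S, L (T u)⁆ v + ⁅S, R (T v)⁆ u = 0) (k l : ℕ) (a b : K) :
    IsOOp m L R (a • (T ∘ₗ (S ^ k)) + b • (T ∘ₗ (S ^ l))) := by
  refine isOOp_smul_add_smul m L R (isOOp_comp_pow m hT hL hR hLR k)
    (isOOp_comp_pow m hT hL hR hLR l) (fun u v => ?_) a b
  simp only [LinearMap.comp_apply]
  rw [hT, hT, pow_apply_left_add_right T S hL hR hLR, pow_apply_left_add_right T S hL hR hLR]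
  simp only [map_add]
  abel

theorem lie_apply_eq_lie_mul_of_apply_map {N : Module.End K g} (A : g →ₗ[K] Module.End K V)
    (h : ∀ x v, A (N x) (S v) = S (A (N x) v) + A x (S (S v)) - S (A x (S v))) (x : g) :
    ⁅S, A (N x)⁆ = ⁅S, A x⁆ * S := by
  ext v
  simp only [Ring.lie_def, LinearMap.sub_apply, Module.End.mul_apply]
  rw [h]
  abel

theorem lie_left_apply_add_lie_right_apply_eq_zero {N : Module.End K g}
    (hNT : ∀ v, N (T v) = T (S v))
    (hmul : ∀ u v, L (N (T u)) v + R (N (T v)) u =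
      (L (T (S u)) v + R (T v) (S u)) + (L (T u) (S v) + R (T (S v)) u) -
        S (L (T u) v + R (T v) u)) (u v : V) :
    ⁅S, L (T u)⁆ v + ⁅S, R (T v)⁆ u = 0 := by
  have h := hmul u v
  rw [hNT, hNT, map_add] at h
  simp only [Ring.lie_def, LinearMap.sub_apply, Module.End.mul_apply]
  linear_combination (norm := module) h

end OOperator

theorem on_structure_hierarchy_general {K g V : Type*} [Field K]
    [AddCommGroup g] [Module K g] [AddCommGroup V] [Module K V]
    (m : g →ₗ[K] g →ₗ[K] g)
    (L R : g →ₗ[K] Module.End K V)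
    (T : V →ₗ[K] g) (hT : IsOOp m L R T)
    (N : Module.End K g) (S : Module.End K V)
    (hLS : ∀ (x : g) (v : V),
      L (N x) (S v) = S (L (N x) v) + L x (S (S v)) - S (L x (S v)))
    (hRS : ∀ (x : g) (v : V),
      R (N x) (S v) = S (R (N x) v) + R x (S (S v)) - S (R x (S v)))
    (hNT : ∀ v : V, N (T v) = T (S v))
    (hmul : ∀ u v : V,
      L (N (T u)) v + R (N (T v)) u =
      (L (T (S u)) v + R (T v) (S u)) + (L (T u) (S v) + R (T (S v)) u) -
        S (L (T u) v + R (T v) u)) :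
    (∀ k : ℕ, IsOOp m L R ((N ^ k) ∘ₗ T)) ∧
    (∀ (k l : ℕ) (a b : K), IsOOp m L R (a • ((N ^ k) ∘ₗ T) + b • ((N ^ l) ∘ₗ T))) := by
  have hNT_pow (k : ℕ) : (N ^ k) ∘ₗ T = T ∘ₗ (S ^ k) :=
    Module.End.commute_pow_left_of_commute (LinearMap.ext hNT) k
  have hL (u : V) : ⁅S, L (T (S u))⁆ = ⁅S, L (T u)⁆ * S := by
    rw [← hNT]; exact lie_apply_eq_lie_mul_of_apply_map L hLS (T u)
  have hR (v : V) : ⁅S, R (T (S v))⁆ = ⁅S, R (T v)⁆ * S := by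
    rw [← hNT]; exact lie_apply_eq_lie_mul_of_apply_map R hRS (T v)
  have hLR := lie_left_apply_add_lie_right_apply_eq_zero hNT hmul
  simp only [hNT_pow]
  exact ⟨isOOp_comp_pow m hT hL hR hLR,
    isOOp_smul_comp_pow_add_smul_comp_pow m hT hL hR hLR⟩

/-- for an ON-structure (T,N,S), every T_k = N^k ∘ T is an
O-operator, and any two of them are compatible. -/
theorem on_structure_hierarchy {K g V : Type*} [Field K]
    [AddCommGroup g] [Module K g] [AddCommGroup V] [Module K V]
    (m : g →ₗ[K] g →ₗ[K] g) (hm : PreLieFn (fun x y => m x y))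
    (L R : g →ₗ[K] Module.End K V)
    (hb : BimodFn (fun x y => m x y) (fun x u => L x u) (fun x u => R x u))
    (T : V →ₗ[K] g) (hT : IsOOp m L R T)
    (N : Module.End K g) (S : Module.End K V)
    (hN : NijFn (fun x y => m x y) N)
    (hLS : ∀ (x : g) (v : V),
      L (N x) (S v) = S (L (N x) v) + L x (S (S v)) - S (L x (S v)))
    (hRS : ∀ (x : g) (v : V),
      R (N x) (S v) = S (R (N x) v) + R x (S (S v)) - S (R x (S v)))
    (hNT : ∀ v : V, N (T v) = T (S v))
    (hmul : ∀ u v : V,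
      L (N (T u)) v + R (N (T v)) u =
      (L (T (S u)) v + R (T v) (S u)) + (L (T u) (S v) + R (T (S v)) u) -
        S (L (T u) v + R (T v) u)) :
    (∀ k : ℕ, IsOOp m L R ((N ^ k) ∘ₗ T)) ∧
    (∀ (k l : ℕ) (a b : K), IsOOp m L R (a • ((N ^ k) ∘ₗ T) + b • ((N ^ l) ∘ₗ T))) :=
  on_structure_hierarchy_general m L R T hT N S hLS hRS hNT hmul
end

section
/- Let R be a Rota-Baxter operator on a pre-Lie algebra (g, ·), i.e., R(x)·R(y) = R(R(x)·y + x·R(y)). A linear map Ω: g → g satisfies the two conditions Ω(x·y) = L_x Ω(y) + R_y Ω(x) (with L,R left and right multiplication) and Ω(x) ·^R Ω(y) = Ω(𝔏^R_{Ω(x)} y + ℜ^R_{Ω(y)} x) if and only if both Ω and Ω∘R∘Ω are derivations of (g, ·). -/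
/-!
Once `Ω` is a derivation, applying it to the right-hand side of the second Maurer–Cartan
condition and expanding by the Leibniz rule reproduces the left-hand side plus the Leibniz
defect of `Ω ∘ R ∘ Ω`; so the second condition holds exactly when that defect vanishes.
-/

section

variable {K g : Type*} [CommSemiring K] [AddCommGroup g] [Module K g]
  (m : g →ₗ[K] g →ₗ[K] g) (T D : Module.End K g)

theorem map_strongMC_rhs_of_leibniz (hD : ∀ x y : g, D (m x y) = m (D x) y + m x (D y))
    (x y : g) :
    D ((m (T (D x)) y - T (m (D x) y)) + (m x (T (D y)) - T (m x (D y)))) =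
      (m (T (D x)) (D y) + m (D x) (T (D y))) +
        (m (D (T (D x))) y + m x (D (T (D y))) - D (T (D (m x y)))) := by
  simp only [map_add, map_sub, hD]
  abel

end

theorem rota_baxter_strong_MC_iff_derivations_general {K g : Type*} [Field K]
    [AddCommGroup g] [Module K g]
    (m : g →ₗ[K] g →ₗ[K] g)
    (Rb : Module.End K g)
    (Ω : Module.End K g) :
    ((∀ x y : g, Ω (m x y) = m x (Ω y) + m (Ω x) y) ∧
     (∀ x y : g,
        (m (Rb (Ω x)) (Ω y) + m (Ω x) (Rb (Ω y))) =
        Ω ((m (Rb (Ω x)) y - Rb (m (Ω x) y)) + (m x (Rb (Ω y)) - Rb (m x (Ω y)))))) ↔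
    ((∀ x y : g, Ω (m x y) = m (Ω x) y + m x (Ω y)) ∧
     (∀ x y : g, Ω (Rb (Ω (m x y))) = m (Ω (Rb (Ω x))) y + m x (Ω (Rb (Ω y))))) := by
  have leibniz_comm : (∀ x y : g, Ω (m x y) = m x (Ω y) + m (Ω x) y) ↔
      ∀ x y : g, Ω (m x y) = m (Ω x) y + m x (Ω y) :=
    forall₂_congr fun x y => by rw [add_comm]
  rw [leibniz_comm]
  refine and_congr_right fun hΩ => forall₂_congr fun x y => ?_
  rw [map_strongMC_rhs_of_leibniz m Rb Ω hΩ, left_eq_add, sub_eq_zero, eq_comm]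

/-- for a Rota-Baxter operator Rb on a pre-Lie algebra (g,·),
a linear map Ω satisfies the two strong Maurer-Cartan conditions iff both Ω and
Ω ∘ Rb ∘ Ω are derivations of (g, ·). -/
theorem rota_baxter_strong_MC_iff_derivations {K g : Type*} [Field K]
    [AddCommGroup g] [Module K g]
    (m : g →ₗ[K] g →ₗ[K] g) (hm : PreLieFn (fun x y => m x y))
    (Rb : Module.End K g)
    (hRb : ∀ x y : g, m (Rb x) (Rb y) = Rb (m (Rb x) y + m x (Rb y)))
    (Ω : Module.End K g) :
    ((∀ x y : g, Ω (m x y) = m x (Ω y) + m (Ω x) y) ∧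
     (∀ x y : g,
        (m (Rb (Ω x)) (Ω y) + m (Ω x) (Rb (Ω y))) =
        Ω ((m (Rb (Ω x)) y - Rb (m (Ω x) y)) + (m x (Rb (Ω y)) - Rb (m x (Ω y)))))) ↔
    ((∀ x y : g, Ω (m x y) = m (Ω x) y + m x (Ω y)) ∧
     (∀ x y : g, Ω (Rb (Ω (m x y))) = m (Ω (Rb (Ω x))) y + m x (Ω (Rb (Ω y))))) :=
  rota_baxter_strong_MC_iff_derivations_general m Rb Ω
end

section
/- Let T: V → g be an O-operator on a bimodule (V; L, R) over a pre-Lie algebra (g, ·), and let Ω: g → V be a linear map satisfying (i) Ω(x·y) = L_x Ω(y) + R_y Ω(x) and (ii) Ω(x) ·^T Ω(y) = Ω(𝔏^T_{Ω(x)} y + ℜ^T_{Ω(y)} x) for all x,y ∈ g. Then N = T∘Ω is a Nijenhuis operator on (g, ·). -/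
/-- The right-hand side is `𝔏^T_{Ω x} y + ℜ^T_{Ω y} x` in the paper's notation. -/
theorem deformed_mul_eq_of_derivation {K g V : Type*} [CommRing K]
    [AddCommGroup g] [Module K g] [AddCommGroup V] [Module K V]
    (m : g →ₗ[K] g →ₗ[K] g) (L R : g →ₗ[K] Module.End K V) (T : V →ₗ[K] g)
    (Ω : g →ₗ[K] V) (hΩ : ∀ x y : g, Ω (m x y) = L x (Ω y) + R y (Ω x)) (x y : g) :
    m (T (Ω x)) y + m x (T (Ω y)) - T (Ω (m x y)) =
      (m (T (Ω x)) y - T (R y (Ω x))) + (m x (T (Ω y)) - T (L x (Ω y))) := by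
  rw [hΩ, map_add]
  abel

theorem strong_MC_gives_nijenhuis_general {K g V : Type*} [Field K]
    [AddCommGroup g] [Module K g] [AddCommGroup V] [Module K V]
    (m : g →ₗ[K] g →ₗ[K] g)
    (L R : g →ₗ[K] Module.End K V)
    (T : V →ₗ[K] g) (hT : IsOOp m L R T)
    (Ω : g →ₗ[K] V)
    (hΩ1 : ∀ x y : g, Ω (m x y) = L x (Ω y) + R y (Ω x))
    (hΩ2 : ∀ x y : g,
      L (T (Ω x)) (Ω y) + R (T (Ω y)) (Ω x) =
      Ω ((m (T (Ω x)) y - T (R y (Ω x))) + (m x (T (Ω y)) - T (L x (Ω y))))) :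
    NijFn (fun x y => m x y) (fun x : g => T (Ω x)) := by
  intro x y
  calc m (T (Ω x)) (T (Ω y))
      = T (L (T (Ω x)) (Ω y) + R (T (Ω y)) (Ω x)) := hT (Ω x) (Ω y)
    _ = T (Ω (m (T (Ω x)) y + m x (T (Ω y)) - T (Ω (m x y)))) := by
      rw [hΩ2, deformed_mul_eq_of_derivation m L R T Ω hΩ1]

/-- if Ω is a solution of the strong Maurer-Cartan equation on
g ⋈ V_T, then N = T ∘ Ω is a Nijenhuis operator on (g, ·). -/
theorem strong_MC_gives_nijenhuis {K g V : Type*} [Field K]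
    [AddCommGroup g] [Module K g] [AddCommGroup V] [Module K V]
    (m : g →ₗ[K] g →ₗ[K] g) (hm : PreLieFn (fun x y => m x y))
    (L R : g →ₗ[K] Module.End K V)
    (hb : BimodFn (fun x y => m x y) (fun x u => L x u) (fun x u => R x u))
    (T : V →ₗ[K] g) (hT : IsOOp m L R T)
    (Ω : g →ₗ[K] V)
    (hΩ1 : ∀ x y : g, Ω (m x y) = L x (Ω y) + R y (Ω x))
    (hΩ2 : ∀ x y : g,
      L (T (Ω x)) (Ω y) + R (T (Ω y)) (Ω x) =
      Ω ((m (T (Ω x)) y - T (R y (Ω x))) + (m x (T (Ω y)) - T (L x (Ω y))))) :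
    NijFn (fun x y => m x y) (fun x : g => T (Ω x)) :=
  strong_MC_gives_nijenhuis_general m L R T hT Ω hΩ1 hΩ2
end

section
/- Let T: V → g be an O-operator on a bimodule (V; L, R) over a pre-Lie algebra (g, ·), and let Ω: g → V satisfy Ω(x·y) = L_x Ω(y) + R_y Ω(x) and Ω(x)·^T Ω(y) = Ω(𝔏^T_{Ω(x)} y + ℜ^T_{Ω(y)} x) for all x,y ∈ g. Then with N = T∘Ω and S = Ω∘T, the triple (T, N, S) is an ON-structure: N is a Nijenhuis operator on g, (N,S) satisfy L_{N(x)}S(v) = S(L_{N(x)}v) + L_x S²(v) − S(L_x S(v)) and R_{N(x)}S(v) = S(R_{N(x)}v) + R_x S²(v) − S(R_x S(v)), N∘T = T∘S, and u·^{N∘T} v = S(u)·^T v + u·^T S(v) − S(u·^T v). -/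
/-! Everything follows from two facts about the O-operator `T`: it intertwines `L`, `R` with
the actions `𝔏^T`, `ℜ^T` (`T ∘ L_{T u} = 𝔏^T_u ∘ T`, `T ∘ R_{T u} = ℜ^T_u ∘ T`), and, since `Ω`
is a derivation, `Ω ∘ T` carries `u ·^T v` to `L_{T u} Ω T v + R_{T v} Ω T u`. Feeding these into
the strong Maurer–Cartan equation at `(x, y)`, `(x, T v)` and `(T v, x)` yields the Nijenhuis
identity and the two compatibility conditions. -/

section

variable {K g V : Type*} [Field K] [AddCommGroup g] [Module K g] [AddCommGroup V] [Module K V]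
  {m : g →ₗ[K] g →ₗ[K] g} {L R : g →ₗ[K] Module.End K V} {T : V →ₗ[K] g} {Ω : g →ₗ[K] V}

theorem IsOOp.mul_sub_map_R (hT : IsOOp m L R T) (u v : V) :
    m (T u) (T v) - T (R (T v) u) = T (L (T u) v) := by
  rw [hT, map_add, add_sub_cancel_right]

theorem IsOOp.mul_sub_map_L (hT : IsOOp m L R T) (u v : V) :
    m (T u) (T v) - T (L (T u) v) = T (R (T v) u) := by
  rw [hT, map_add, add_sub_cancel_left]

theorem IsOOp.map_comp_map_O_product (hT : IsOOp m L R T)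
    (hΩ : ∀ x y : g, Ω (m x y) = L x (Ω y) + R y (Ω x)) (u v : V) :
    Ω (T (L (T u) v + R (T v) u)) = L (T u) (Ω (T v)) + R (T v) (Ω (T u)) := by
  rw [← hT, hΩ]

theorem IsOOp.nijFn_comp (hT : IsOOp m L R T)
    (hΩ : ∀ x y : g, Ω (m x y) = L x (Ω y) + R y (Ω x))
    (hMC : ∀ x y : g, L (T (Ω x)) (Ω y) + R (T (Ω y)) (Ω x) =
      Ω ((m (T (Ω x)) y - T (R y (Ω x))) + (m x (T (Ω y)) - T (L x (Ω y))))) :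
    NijFn (fun x y => m x y) (fun x => T (Ω x)) := by
  intro x y
  dsimp only
  rw [hT, hMC]
  congr 2
  rw [hΩ, map_add]
  abel

theorem IsOOp.left_action_compat (hT : IsOOp m L R T)
    (hΩ : ∀ x y : g, Ω (m x y) = L x (Ω y) + R y (Ω x))
    (hMC : ∀ x y : g, L (T (Ω x)) (Ω y) + R (T (Ω y)) (Ω x) =
      Ω ((m (T (Ω x)) y - T (R y (Ω x))) + (m x (T (Ω y)) - T (L x (Ω y)))))
    (x : g) (v : V) :
    L (T (Ω x)) (Ω (T v)) =
      Ω (T (L (T (Ω x)) v)) + L x (Ω (T (Ω (T v)))) - Ω (T (L x (Ω (T v)))) := by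
  have h := hMC x (T v)
  rw [hT.mul_sub_map_R, map_add, map_sub, hΩ] at h
  rw [eq_sub_of_add_eq h]
  abel

theorem IsOOp.right_action_compat (hT : IsOOp m L R T)
    (hΩ : ∀ x y : g, Ω (m x y) = L x (Ω y) + R y (Ω x))
    (hMC : ∀ x y : g, L (T (Ω x)) (Ω y) + R (T (Ω y)) (Ω x) =
      Ω ((m (T (Ω x)) y - T (R y (Ω x))) + (m x (T (Ω y)) - T (L x (Ω y)))))
    (x : g) (v : V) :
    R (T (Ω x)) (Ω (T v)) =
      Ω (T (R (T (Ω x)) v)) + R x (Ω (T (Ω (T v)))) - Ω (T (R x (Ω (T v)))) := by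
  have h := hMC (T v) x
  rw [hT.mul_sub_map_L, map_add, map_sub, hΩ] at h
  rw [eq_sub_of_add_eq' h]
  abel

end

theorem strong_MC_gives_ON_structure_general {K g V : Type*} [Field K]
    [AddCommGroup g] [Module K g] [AddCommGroup V] [Module K V]
    (m : g →ₗ[K] g →ₗ[K] g)
    (L R : g →ₗ[K] Module.End K V)
    (T : V →ₗ[K] g) (hT : IsOOp m L R T)
    (Ω : g →ₗ[K] V)
    (hΩ1 : ∀ x y : g, Ω (m x y) = L x (Ω y) + R y (Ω x))
    (hΩ2 : ∀ x y : g,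
      L (T (Ω x)) (Ω y) + R (T (Ω y)) (Ω x) =
      Ω ((m (T (Ω x)) y - T (R y (Ω x))) + (m x (T (Ω y)) - T (L x (Ω y))))) :
    NijFn (fun x y => m x y) (fun x : g => T (Ω x)) ∧
    (∀ (x : g) (v : V),
      L (T (Ω x)) (Ω (T v)) =
        Ω (T (L (T (Ω x)) v)) + L x (Ω (T (Ω (T v)))) - Ω (T (L x (Ω (T v))))) ∧
    (∀ (x : g) (v : V),
      R (T (Ω x)) (Ω (T v)) =
        Ω (T (R (T (Ω x)) v)) + R x (Ω (T (Ω (T v)))) - Ω (T (R x (Ω (T v))))) ∧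
    (∀ v : V, T (Ω (T v)) = T (Ω (T v))) ∧
    (∀ u v : V,
      L (T (Ω (T u))) v + R (T (Ω (T v))) u =
        (L (T (Ω (T u))) v + R (T v) (Ω (T u))) +
        (L (T u) (Ω (T v)) + R (T (Ω (T v))) u) -
        Ω (T (L (T u) v + R (T v) u))) := by
  refine ⟨hT.nijFn_comp hΩ1 hΩ2, hT.left_action_compat hΩ1 hΩ2,
    hT.right_action_compat hΩ1 hΩ2, fun _ => rfl, fun u v => ?_⟩
  rw [hT.map_comp_map_O_product hΩ1]
  abel

/-- if Ω is a solution of the strong Maurer-Cartan equation on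
g ⋈ V_T, then (T, N = T∘Ω, S = Ω∘T) is an ON-structure. -/
theorem strong_MC_gives_ON_structure {K g V : Type*} [Field K]
    [AddCommGroup g] [Module K g] [AddCommGroup V] [Module K V]
    (m : g →ₗ[K] g →ₗ[K] g) (hm : PreLieFn (fun x y => m x y))
    (L R : g →ₗ[K] Module.End K V)
    (hb : BimodFn (fun x y => m x y) (fun x u => L x u) (fun x u => R x u))
    (T : V →ₗ[K] g) (hT : IsOOp m L R T)
    (Ω : g →ₗ[K] V)
    (hΩ1 : ∀ x y : g, Ω (m x y) = L x (Ω y) + R y (Ω x))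
    (hΩ2 : ∀ x y : g,
      L (T (Ω x)) (Ω y) + R (T (Ω y)) (Ω x) =
      Ω ((m (T (Ω x)) y - T (R y (Ω x))) + (m x (T (Ω y)) - T (L x (Ω y))))) :
    NijFn (fun x y => m x y) (fun x : g => T (Ω x)) ∧
    (∀ (x : g) (v : V),
      L (T (Ω x)) (Ω (T v)) =
        Ω (T (L (T (Ω x)) v)) + L x (Ω (T (Ω (T v)))) - Ω (T (L x (Ω (T v))))) ∧
    (∀ (x : g) (v : V),
      R (T (Ω x)) (Ω (T v)) =
        Ω (T (R (T (Ω x)) v)) + R x (Ω (T (Ω (T v)))) - Ω (T (R x (Ω (T v))))) ∧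
    (∀ v : V, T (Ω (T v)) = T (Ω (T v))) ∧
    (∀ u v : V,
      L (T (Ω (T u))) v + R (T (Ω (T v))) u =
        (L (T (Ω (T u))) v + R (T v) (Ω (T u))) +
        (L (T u) (Ω (T v)) + R (T (Ω (T v))) u) -
        Ω (T (L (T u) v + R (T v) u))) :=
  strong_MC_gives_ON_structure_general m L R T hT Ω hΩ1 hΩ2
end
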